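/- arXiv:2204.13660 — 3 statements merged into one kernel-verified Lean document; each statement's English description precedes it below -/
import Mathlib

section
/- Let Y_t be the set of conjugacy classes of SL₂(ℤ) of trace t, and X_{t,n} the set of conjugacy classes of B₃ of trace t and exponent sum n (as defined via φ and ε). Then for any integers t and n, the map induced by φ gives a bijection from the disjoint union ∐_{j=0}^{11} X_{t,n+j} onto Y_t. In particular the restriction of the induced map φ₊: X_{t,n} → Y_t is injective for each fixed n. -/
/-!
φ is onto because `φ σ₁` and `φ Δ⁻¹` are the generators `T` and `S` of SL₂(ℤ).
Its kernel is ⟨Δ⁴⟩. Indeed, Δ² is central, and `σ₁ ↦ b⁻¹a`, `σ₂ ↦ ab⁻¹` defines a map from B₃ to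
the free product C₂ * C₃ = ⟨a⟩ * ⟨b⟩ through which every homomorphism killing Δ² factors
(`a ↦ Δ`, `b ↦ σ₁σ₂`); in particular its kernel lies in ⟨Δ²⟩. Through φ, C₂ * C₃ acts on the
upper half-plane, faithfully by ping-pong on the half-planes Re z < 0 and Re z > 0, so
ker φ ⊆ ⟨Δ²⟩; as φ(Δ²) = -1, in fact ker φ = ⟨Δ⁴⟩. So braids with conjugate images are conjugate
up to a central factor Δ^{4m}, which shifts the exponent sum by 12m, and exactly one such shift
moves the exponent sum into a window of length 12.
-/

open Matrix

abbrev SL2Z := Matrix.SpecialLinearGroup (Fin 2) ℤ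

def braidRels : Set (FreeGroup Bool) :=
  {FreeGroup.of true * FreeGroup.of false * FreeGroup.of true *
    (FreeGroup.of false * FreeGroup.of true * FreeGroup.of false)⁻¹}

abbrev B3 := PresentedGroup braidRels

def σ₁ : B3 := PresentedGroup.of true
def σ₂ : B3 := PresentedGroup.of false
def Δ : B3 := σ₁ * σ₂ * σ₁

def S : SL2Z := ⟨!![1, 1; 0, 1], by norm_num [Matrix.det_fin_two_of]⟩
def T : SL2Z := ⟨!![1, 0; -1, 1], by norm_num [Matrix.det_fin_two_of]⟩

lemma STS_eq_TST : S * T * S = T * S * T := by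
  ext i j
  fin_cases i <;> fin_cases j <;> rfl

def φ : B3 →* SL2Z :=
  PresentedGroup.toGroup (f := fun b => if b then S else T) (by
    intro r hr
    simp only [braidRels, Set.mem_singleton_iff] at hr
    subst hr
    simp only [_root_.map_mul, _root_.map_inv, FreeGroup.lift_apply_of, if_true, if_false]
    rw [mul_inv_eq_one]
    exact STS_eq_TST)

def ε : B3 →* Multiplicative ℤ :=
  PresentedGroup.toGroup (f := fun _ => Multiplicative.ofAdd (1 : ℤ)) (by
    intro r hr
    simp only [braidRels, Set.mem_singleton_iff] at hr
    subst hr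
    simp only [_root_.map_mul, _root_.map_inv, FreeGroup.lift_apply_of]
    group)

def expSum (g : B3) : ℤ := Multiplicative.toAdd (ε g)

def trB (g : B3) : ℤ := Matrix.trace (φ g : Matrix (Fin 2) (Fin 2) ℤ)

/-- The set of conjugacy classes in B₃ of trace t and exponent sum n. -/
def Xset (t n : ℤ) : Set (ConjClasses B3) :=
  {c | ∃ g : B3, ConjClasses.mk g = c ∧ trB g = t ∧ expSum g = n}

/-- The set of conjugacy classes in SL₂(ℤ) of trace t. -/
def Yset (t : ℤ) : Set (ConjClasses SL2Z) :=
  {c | ∃ m : SL2Z, ConjClasses.mk m = c ∧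
    Matrix.trace (m : Matrix (Fin 2) (Fin 2) ℤ) = t}

section CyclicHom

variable {G : Type*} [Group G] {n : ℕ}

def zmodPowHom (g : G) (hg : g ^ n = 1) : Multiplicative (ZMod n) →* G :=
  AddMonoidHom.toMultiplicativeLeft <|
    ZMod.lift n ⟨zmultiplesHom _ (Additive.ofMul g), by simpa using congrArg Additive.ofMul hg⟩

@[simp]
lemma zmodPowHom_ofAdd_one (g : G) (hg : g ^ n = 1) :
    zmodPowHom g hg (.ofAdd 1) = g := by
  simp only [zmodPowHom, AddMonoidHom.toMultiplicativeLeft_apply_apply, toAdd_ofAdd]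
  rw [← Int.cast_one, ZMod.lift_coe]
  simp

end CyclicHom

abbrev C₂C₃ := Monoid.CoprodI fun i : Bool => Multiplicative (ZMod (cond i 2 3))

namespace C₂C₃

def a : C₂C₃ := Monoid.CoprodI.of (i := true) (.ofAdd 1)
def b : C₂C₃ := Monoid.CoprodI.of (i := false) (.ofAdd 1)

lemma a_sq : a ^ 2 = 1 := by
  rw [a, ← map_pow]; exact map_eq_one_iff _ (Monoid.CoprodI.of_injective _) |>.mpr (by decide)

lemma b_pow_three : b ^ 3 = 1 := by
  rw [b, ← map_pow]; exact map_eq_one_iff _ (Monoid.CoprodI.of_injective _) |>.mpr (by decide)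

variable {G : Type*} [Group G]

noncomputable def lift (x y : G) (hx : x ^ 2 = 1) (hy : y ^ 3 = 1) : C₂C₃ →* G :=
  Monoid.CoprodI.lift fun
    | true => zmodPowHom x hx
    | false => zmodPowHom y hy

lemma lift_a (x y : G) (hx : x ^ 2 = 1) (hy : y ^ 3 = 1) : lift x y hx hy a = x := by
  simp [lift, a]

lemma lift_b (x y : G) (hx : x ^ 2 = 1) (hy : y ^ 3 = 1) : lift x y hx hy b = y := by
  simp [lift, b]

open Pointwise in
lemma lift_injective_of_ping_pong {α : Type*} [MulAction G α] {X Y : Set α}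
    (hX : X.Nonempty) (hY : Y.Nonempty) (hXY : Disjoint X Y)
    (x y : G) (hx : x ^ 2 = 1) (hy : y ^ 3 = 1)
    (hxY : ∀ z ∈ Y, x • z ∈ X) (hyX : ∀ z ∈ X, y • z ∈ Y) (hy2X : ∀ z ∈ X, (y * y) • z ∈ Y) :
    Function.Injective (lift x y hx hy) := by
  refine Monoid.CoprodI.lift_injective_of_ping_pong _ (.inr ⟨false, by simp⟩)
    (fun i => cond i X Y) (by rintro (_ | _) <;> assumption) ?_ ?_
  · rintro (_ | _) (_ | _) h
    exacts [(h rfl).elim, hXY.symm, hXY, (h rfl).elim]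
  · rintro (_ | _) (_ | _) h g hg <;> simp only [Set.smul_set_subset_iff]
    · exact (h rfl).elim
    · obtain rfl | rfl := (by decide : ∀ g : Multiplicative (ZMod 3),
          g ≠ 1 → g = .ofAdd 1 ∨ g = .ofAdd 1 * .ofAdd 1) g hg
      · simpa [lift] using hyX
      · simpa [lift] using hy2X
    · obtain rfl := (by decide : ∀ g : Multiplicative (ZMod 2), g ≠ 1 → g = .ofAdd 1) g hg
      simpa [lift] using hxY
    · exact (h rfl).elim

end C₂C₃

lemma Subgroup.normal_zpowers_of_mem_center {G : Type*} [Group G] {z : G}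
    (hz : z ∈ Subgroup.center G) : (Subgroup.zpowers z).Normal where
  conj_mem x hx g := by
    rwa [Subgroup.mem_center_iff.mp (Subgroup.zpowers_le.mpr hz hx) g, mul_inv_cancel_right]

lemma Δ_eq_σ₂_mul_σ₁_mul_σ₂ : Δ = σ₂ * σ₁ * σ₂ := by
  have := PresentedGroup.mk_eq_mk_of_mul_inv_mem (rels := braidRels) rfl
  simp only [map_mul] at this
  exact this

lemma Δ_mul_σ₁ : Δ * σ₁ = σ₂ * Δ := by
  nth_rewrite 1 [Δ_eq_σ₂_mul_σ₁_mul_σ₂]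
  simp only [Δ, mul_assoc]

lemma Δ_mul_σ₂ : Δ * σ₂ = σ₁ * Δ := by
  nth_rewrite 2 [Δ_eq_σ₂_mul_σ₁_mul_σ₂]
  simp only [Δ, mul_assoc]

lemma σ₁_mul_σ₂_pow_three : (σ₁ * σ₂) ^ 3 = Δ ^ 2 := by
  rw [pow_two]
  nth_rewrite 2 [Δ_eq_σ₂_mul_σ₁_mul_σ₂]
  simp only [Δ, pow_succ, pow_zero, one_mul, mul_assoc]

lemma Δ_sq_mem_center : Δ ^ 2 ∈ Subgroup.center B3 := by
  have hσ₁ : Δ ^ 2 * σ₁ = σ₁ * Δ ^ 2 := by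
    rw [pow_two, mul_assoc, Δ_mul_σ₁, ← mul_assoc, Δ_mul_σ₂, mul_assoc]
  have hσ₂ : Δ ^ 2 * σ₂ = σ₂ * Δ ^ 2 := by
    rw [pow_two, mul_assoc, Δ_mul_σ₂, ← mul_assoc, Δ_mul_σ₁, mul_assoc]
  have hcent : ⊤ ≤ Subgroup.centralizer {Δ ^ 2} := by
    rw [← PresentedGroup.closure_range_of, Subgroup.closure_le]
    rintro _ ⟨_ | _, rfl⟩ <;> simp only [SetLike.mem_coe, Subgroup.mem_centralizer_singleton_iff]
    exacts [hσ₂.symm, hσ₁.symm]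
  exact Subgroup.mem_center_iff.mpr fun g =>
    Subgroup.mem_centralizer_singleton_iff.mp (hcent (Subgroup.mem_top g))

instance : (Subgroup.zpowers (Δ ^ 2)).Normal :=
  Subgroup.normal_zpowers_of_mem_center Δ_sq_mem_center

lemma expSum_mul (g h : B3) : expSum (g * h) = expSum g + expSum h := by
  simp [expSum]

lemma expSum_zpow (g : B3) (k : ℤ) : expSum (g ^ k) = k * expSum g := by
  simp [expSum]

lemma expSum_Δ : expSum Δ = 3 := by
  simp [expSum, Δ, ε, σ₁, σ₂]

lemma expSum_eq_of_isConj {g h : B3} (hgh : IsConj g h) : expSum g = expSum h := by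
  obtain ⟨c, rfl⟩ := isConj_iff.mp hgh
  simp [expSum]

lemma expSum_Δ_pow_four_zpow (m : ℤ) : expSum ((Δ ^ 4) ^ m) = 12 * m := by
  rw [expSum_zpow, ← zpow_natCast, expSum_zpow, expSum_Δ]
  push_cast
  ring

lemma φ_σ₁ : φ σ₁ = S := PresentedGroup.toGroup.of _
lemma φ_σ₂ : φ σ₂ = T := PresentedGroup.toGroup.of _

lemma φ_Δ_sq : φ (Δ ^ 2) = -1 := by
  simp only [Δ, map_pow, map_mul, φ_σ₁, φ_σ₂]
  ext i j; fin_cases i <;> fin_cases j <;> rfl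

lemma φ_Δ_pow_four : φ (Δ ^ 4) = 1 := by
  rw [show 4 = 2 * 2 from rfl, pow_mul, map_pow, φ_Δ_sq, neg_one_sq]

lemma φ_Δ_pow_four_zpow_mul (m : ℤ) (g : B3) : φ ((Δ ^ 4) ^ m * g) = φ g := by
  rw [map_mul, map_zpow, φ_Δ_pow_four, _root_.one_zpow, one_mul]

lemma φ_surjective : Function.Surjective φ := by
  rw [← MonoidHom.range_eq_top, eq_top_iff, ← SpecialLinearGroup.SL2Z_generators,
    Subgroup.closure_le]
  rintro _ (rfl | rfl)
  · refine ⟨Δ⁻¹, ?_⟩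
    rw [map_inv, inv_eq_iff_eq_inv]
    simp only [Δ, map_mul, φ_σ₁, φ_σ₂]
    ext i j; fin_cases i <;> fin_cases j <;> rfl
  · exact ⟨σ₁, by rw [φ_σ₁]; ext i j; fin_cases i <;> fin_cases j <;> rfl⟩

open C₂C₃ in
def toC₂C₃ : B3 →* C₂C₃ :=
  PresentedGroup.toGroup (f := fun i => cond i (b⁻¹ * a) (a * b⁻¹)) <| by
    rintro _ rfl
    have ha (x : C₂C₃) : x * a * a = x := by rw [mul_assoc, ← pow_two, a_sq, mul_one]
    have hb : b⁻¹ * (b⁻¹ * b⁻¹) = 1 := by rw [← pow_three, inv_pow, b_pow_three, inv_one]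
    simp only [map_mul, map_inv, FreeGroup.lift_apply_of, cond_true, cond_false, mul_inv_eq_one,
      ← mul_assoc, ha]
    rw [mul_assoc (b⁻¹), hb, one_mul, mul_assoc, mul_assoc, hb, mul_one]

lemma toC₂C₃_σ₁ : toC₂C₃ σ₁ = C₂C₃.b⁻¹ * C₂C₃.a := PresentedGroup.toGroup.of _
lemma toC₂C₃_σ₂ : toC₂C₃ σ₂ = C₂C₃.a * C₂C₃.b⁻¹ := PresentedGroup.toGroup.of _

lemma C₂C₃.lift_comp_toC₂C₃ {G : Type*} [Group G] (ψ : B3 →* G) (h₁ : ψ Δ ^ 2 = 1)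
    (h₂ : ψ (σ₁ * σ₂) ^ 3 = 1) : (C₂C₃.lift (ψ Δ) (ψ (σ₁ * σ₂)) h₁ h₂).comp toC₂C₃ = ψ := by
  refine PresentedGroup.ext fun i => ?_
  cases i
  · change C₂C₃.lift _ _ h₁ h₂ (toC₂C₃ σ₂) = ψ σ₂
    rw [toC₂C₃_σ₂, map_mul, map_inv, C₂C₃.lift_a, C₂C₃.lift_b, ← map_inv, ← map_mul,
      Δ_eq_σ₂_mul_σ₁_mul_σ₂]
    group
  · change C₂C₃.lift _ _ h₁ h₂ (toC₂C₃ σ₁) = ψ σ₁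
    rw [toC₂C₃_σ₁, map_mul, map_inv, C₂C₃.lift_a, C₂C₃.lift_b, ← map_inv, ← map_mul, Δ]
    group

lemma ker_toC₂C₃_le : toC₂C₃.ker ≤ Subgroup.zpowers (Δ ^ 2) := by
  intro w hw
  have h₁ : (QuotientGroup.mk' (Subgroup.zpowers (Δ ^ 2)) Δ) ^ 2 = 1 := by
    rw [← map_pow, QuotientGroup.mk'_apply, QuotientGroup.eq_one_iff]
    exact Subgroup.mem_zpowers _
  have h₂ : (QuotientGroup.mk' (Subgroup.zpowers (Δ ^ 2)) (σ₁ * σ₂)) ^ 3 = 1 := by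
    rw [← map_pow, σ₁_mul_σ₂_pow_three, map_pow, h₁]
  rw [← QuotientGroup.ker_mk' (Subgroup.zpowers (Δ ^ 2)), ← C₂C₃.lift_comp_toC₂C₃ _ h₁ h₂]
  exact MonoidHom.mem_ker.mpr (by rw [MonoidHom.comp_apply, MonoidHom.mem_ker.mp hw, map_one])

noncomputable def φAct : B3 →* Equiv.Perm UpperHalfPlane := (MulAction.toPermHom SL2Z _).comp φ

lemma φAct_apply (g : B3) (z : UpperHalfPlane) : φAct g z = φ g • z := rfl

lemma φAct_Δ_sq : φAct Δ ^ 2 = 1 := by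
  ext z
  rw [← map_pow, φAct_apply, φ_Δ_sq, ModularGroup.SL_neg_smul, one_smul]
  rfl

lemma φAct_σ₁_mul_σ₂_pow_three : φAct (σ₁ * σ₂) ^ 3 = 1 := by
  rw [← map_pow, σ₁_mul_σ₂_pow_three, map_pow, φAct_Δ_sq]

lemma coe_smul_SL2Z (g : SL2Z) (z : UpperHalfPlane) :
    ((g • z : UpperHalfPlane) : ℂ) = (g 0 0 * z + g 0 1) / (g 1 0 * z + g 1 1) := by
  rw [UpperHalfPlane.coe_specialLinearGroup_apply]
  simp

lemma re_φ_Δ_smul_neg {z : UpperHalfPlane} (hz : 0 < z.re) : (φ Δ • z).re < 0 := by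
  have : ((φ Δ : SL2Z) : Matrix (Fin 2) (Fin 2) ℤ) = !![0, 1; -1, 0] := by
    simp only [Δ, map_mul, φ_σ₁, φ_σ₂]
    ext i j; fin_cases i <;> fin_cases j <;> rfl
  rw [UpperHalfPlane.re, coe_smul_SL2Z, this]
  simpa using div_pos hz z.normSq_pos

lemma re_φ_σ₁_mul_σ₂_smul_pos {z : UpperHalfPlane} (hz : z.re < 0) :
    0 < (φ (σ₁ * σ₂) • z).re := by
  have : ((φ (σ₁ * σ₂) : SL2Z) : Matrix (Fin 2) (Fin 2) ℤ) = !![0, 1; -1, 1] := by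
    simp only [map_mul, φ_σ₁, φ_σ₂]
    ext i j; fin_cases i <;> fin_cases j <;> rfl
  rw [UpperHalfPlane.re, coe_smul_SL2Z, this]
  have hN : 0 < Complex.normSq (-(z : ℂ) + 1) :=
    Complex.normSq_pos.mpr fun h => z.im_pos.ne' (by simpa using congrArg Complex.im h)
  simpa [Complex.div_re] using div_pos (by linarith) hN

lemma re_φ_σ₁_mul_σ₂_sq_smul_pos {z : UpperHalfPlane} (hz : z.re < 0) :
    0 < (φ ((σ₁ * σ₂) ^ 2) • z).re := by
  have : ((φ ((σ₁ * σ₂) ^ 2) : SL2Z) : Matrix (Fin 2) (Fin 2) ℤ) = !![-1, 1; -1, 0] := by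
    simp only [map_pow, map_mul, φ_σ₁, φ_σ₂]
    ext i j; fin_cases i <;> fin_cases j <;> rfl
  rw [UpperHalfPlane.re, coe_smul_SL2Z, this]
  have hN := z.normSq_pos
  simpa [Complex.div_re] using add_pos_of_pos_of_nonneg (div_pos (by nlinarith) hN)
    (div_nonneg (mul_self_nonneg z.im) hN.le)

lemma injective_lift_φAct :
    Function.Injective (C₂C₃.lift _ _ φAct_Δ_sq φAct_σ₁_mul_σ₂_pow_three) := by
  refine C₂C₃.lift_injective_of_ping_pong (X := {z : UpperHalfPlane | z.re < 0})
    (Y := {z : UpperHalfPlane | 0 < z.re})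
    ⟨.mk (-1 + Complex.I) (by simp), by simp⟩ ⟨.mk (1 + Complex.I) (by simp), by simp⟩
    (Set.disjoint_left.mpr fun z (h₁ : z.re < 0) (h₂ : 0 < z.re) => lt_asymm h₁ h₂) _ _ _ _
    (fun _ => re_φ_Δ_smul_neg) (fun _ => re_φ_σ₁_mul_σ₂_smul_pos) fun z hz => ?_
  rw [← pow_two, ← map_pow]
  exact re_φ_σ₁_mul_σ₂_sq_smul_pos hz

lemma ker_φAct_le : φAct.ker ≤ Subgroup.zpowers (Δ ^ 2) := by
  intro w hw
  refine ker_toC₂C₃_le (MonoidHom.mem_ker.mpr (injective_lift_φAct ?_))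
  rw [map_one, ← MonoidHom.comp_apply, C₂C₃.lift_comp_toC₂C₃, MonoidHom.mem_ker.mp hw]

lemma ker_φ : φ.ker = Subgroup.zpowers (Δ ^ 4) := by
  refine le_antisymm (fun w hw => ?_) (Subgroup.zpowers_le.mpr φ_Δ_pow_four)
  have hφw : φ w = 1 := hw
  obtain ⟨k, rfl⟩ := Subgroup.mem_zpowers_iff.mp
    (ker_φAct_le (show φAct w = 1 by rw [φAct, MonoidHom.comp_apply, hφw, map_one]))
  rw [map_zpow, φ_Δ_sq] at hφw
  obtain ⟨m, rfl⟩ : Even k := by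
    by_contra hk
    rw [Int.not_even_iff_odd.mp hk |>.neg_one_zpow] at hφw
    exact absurd (congrArg (fun g : SL2Z => g 0 0) hφw) (by decide)
  refine Subgroup.mem_zpowers_iff.mpr ⟨m, ?_⟩
  rw [← two_mul, _root_.zpow_mul, zpow_ofNat, ← pow_mul]

lemma exists_isConj_Δ_pow_mul_of_isConj_φ {g h : B3} (hgh : IsConj (φ g) (φ h)) :
    ∃ m : ℤ, IsConj g ((Δ ^ 4) ^ m * h) := by
  obtain ⟨c, hc⟩ := isConj_iff.mp hgh
  obtain ⟨e, rfl⟩ := φ_surjective c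
  have : e * g * e⁻¹ * h⁻¹ ∈ φ.ker := by simp [hc]
  rw [ker_φ] at this
  obtain ⟨m, hm⟩ := Subgroup.mem_zpowers_iff.mp this
  exact ⟨m, isConj_iff.mpr ⟨e, by rw [hm]; group⟩⟩

/-- φ induces a bijection from the disjoint union ∐_{j=0}^{11} X_{t,n+j} onto Y_t;
in particular, its restriction to each X_{t,n} is injective. -/
theorem stmt9 (t n : ℤ) :
    Set.BijOn (ConjClasses.map φ) (⋃ j ∈ Finset.range 12, Xset t (n + j)) (Yset t) ∧
      Set.InjOn (ConjClasses.map φ) (Xset t n) := by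
  have hinj : Set.InjOn (ConjClasses.map φ) (⋃ j ∈ Finset.range 12, Xset t (n + j)) := by
    simp only [Set.InjOn, Set.mem_iUnion, Finset.mem_range]
    rintro _ ⟨j₁, hj₁, g, rfl, -, hg⟩ _ ⟨j₂, hj₂, h, rfl, -, hh⟩ hgh
    obtain ⟨m, hm⟩ := exists_isConj_Δ_pow_mul_of_isConj_φ (ConjClasses.mk_eq_mk_iff_isConj.mp hgh)
    have : expSum g = 12 * m + expSum h := by
      rw [expSum_eq_of_isConj hm, expSum_mul, expSum_Δ_pow_four_zpow]
    obtain rfl : m = 0 := by omega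
    simpa [ConjClasses.mk_eq_mk_iff_isConj] using hm
  refine ⟨⟨?_, hinj, ?_⟩,
    hinj.mono fun c hc => Set.mem_biUnion (x := 0) (by simp) (by simpa using hc)⟩
  · simp only [Set.MapsTo, Set.mem_iUnion]
    rintro _ ⟨j, -, g, rfl, hg, -⟩
    exact ⟨φ g, rfl, hg⟩
  · rintro _ ⟨M, rfl, hM⟩
    obtain ⟨g, rfl⟩ := φ_surjective M
    refine ⟨ConjClasses.mk ((Δ ^ 4) ^ (-((expSum g - n) / 12)) * g), ?_, ?_⟩
    · simp only [Set.mem_iUnion, Finset.mem_range]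
      refine ⟨((expSum g - n) % 12).toNat, by omega, _, rfl, ?_, ?_⟩
      · rw [trB, φ_Δ_pow_four_zpow_mul]
        exact hM
      · rw [expSum_mul, expSum_Δ_pow_four_zpow]
        omega
    · exact congrArg ConjClasses.mk (φ_Δ_pow_four_zpow_mul _ g)
end

section
/- (Chowla–Cowles–Cowles) Fix an integer t with t ≠ ±2. The assignment sending a matrix [[a,b],[c,d]] ∈ SL₂(ℤ) with a + d = t to the integral binary quadratic form b·x² + (d-a)·xy - c·y² induces a well-defined bijection from the set of conjugacy classes of SL₂(ℤ) of trace t to the set of SL₂(ℤ)-equivalence classes of integral binary quadratic forms of discriminant t² - 4. -/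
open Matrix

/-- An integral binary quadratic form ax² + bxy + cy², encoded as the triple (a,b,c). -/
abbrev BQF := ℤ × ℤ × ℤ

/-- The discriminant b² - 4ac of the form (a,b,c). -/
def disc (f : BQF) : ℤ := f.2.1 ^ 2 - 4 * f.1 * f.2.2

/-- The action of M = [[α,β],[γ,δ]] ∈ SL₂(ℤ) on forms: (M·f)(x,y) = f(αx+βy, γx+δy). -/
def actForm (M : SL2Z) (f : BQF) : BQF :=
  let α := (M : Matrix (Fin 2) (Fin 2) ℤ) 0 0
  let β := (M : Matrix (Fin 2) (Fin 2) ℤ) 0 1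
  let γ := (M : Matrix (Fin 2) (Fin 2) ℤ) 1 0
  let δ := (M : Matrix (Fin 2) (Fin 2) ℤ) 1 1
  (f.1 * α ^ 2 + f.2.1 * α * γ + f.2.2 * γ ^ 2,
    2 * f.1 * α * β + f.2.1 * (α * δ + β * γ) + 2 * f.2.2 * γ * δ,
    f.1 * β ^ 2 + f.2.1 * β * δ + f.2.2 * δ ^ 2)

/-- Two forms are equivalent if they lie in the same SL₂(ℤ)-orbit. -/
def formEquiv (f g : BQF) : Prop := ∃ M : SL2Z, actForm M f = g

/-- The form b x² + (d - a) xy - c y² associated to a matrix [[a,b],[c,d]] ∈ SL₂(ℤ). -/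
def matForm (m : SL2Z) : BQF :=
  ((m : Matrix (Fin 2) (Fin 2) ℤ) 0 1,
    (m : Matrix (Fin 2) (Fin 2) ℤ) 1 1 - (m : Matrix (Fin 2) (Fin 2) ℤ) 0 0,
    -((m : Matrix (Fin 2) (Fin 2) ℤ) 1 0))

lemma key (g m m' : SL2Z)
    (h : (m' : Matrix (Fin 2) (Fin 2) ℤ) * (g : Matrix (Fin 2) (Fin 2) ℤ)ᵀ
        = (g : Matrix (Fin 2) (Fin 2) ℤ)ᵀ * (m : Matrix (Fin 2) (Fin 2) ℤ)) :
    actForm g (matForm m) = matForm m' := by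
  have H11 := congrFun (congrFun h 0) 0
  have H12 := congrFun (congrFun h 0) 1
  have H21 := congrFun (congrFun h 1) 0
  have H22 := congrFun (congrFun h 1) 1
  simp [Matrix.mul_apply, Fin.sum_univ_two, Matrix.transpose_apply] at H11 H12 H21 H22
  have D : (g : Matrix (Fin 2) (Fin 2) ℤ) 0 0 * (g : Matrix (Fin 2) (Fin 2) ℤ) 1 1
      - (g : Matrix (Fin 2) (Fin 2) ℤ) 0 1 * (g : Matrix (Fin 2) (Fin 2) ℤ) 1 0 = 1 := by
    have := g.property
    rwa [Matrix.det_fin_two] at this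
  simp only [actForm, matForm]
  set p := (g : Matrix (Fin 2) (Fin 2) ℤ) 0 0 with hp
  set q := (g : Matrix (Fin 2) (Fin 2) ℤ) 0 1 with hq
  set r := (g : Matrix (Fin 2) (Fin 2) ℤ) 1 0 with hr
  set s := (g : Matrix (Fin 2) (Fin 2) ℤ) 1 1 with hs
  refine Prod.ext ?_ (Prod.ext ?_ ?_)
  · linear_combination (-p)*H12 + r*H11 + ((m' : Matrix (Fin 2) (Fin 2) ℤ) 0 1)*D
  · linear_combination (-q)*H12 + s*H11 - p*H22 + r*H21
      - ((m' : Matrix (Fin 2) (Fin 2) ℤ) 0 0 - (m' : Matrix (Fin 2) (Fin 2) ℤ) 1 1)*D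
  · linear_combination (-q)*H22 + s*H21 - ((m' : Matrix (Fin 2) (Fin 2) ℤ) 1 0)*D

def tSL (g : SL2Z) : SL2Z :=
  ⟨(g : Matrix (Fin 2) (Fin 2) ℤ)ᵀ, by rw [Matrix.det_transpose]; exact g.property⟩

lemma matForm_inj (m n : SL2Z)
    (hf : matForm m = matForm n)
    (ht : Matrix.trace (m : Matrix (Fin 2) (Fin 2) ℤ)
        = Matrix.trace (n : Matrix (Fin 2) (Fin 2) ℤ)) : m = n := by
  have h1 := congrArg Prod.fst hf
  have h2 := congrArg (fun x => x.2.1) hf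
  have h3 := congrArg (fun x => x.2.2) hf
  simp [matForm] at h1 h2 h3
  rw [Matrix.trace_fin_two, Matrix.trace_fin_two] at ht
  apply Subtype.ext
  ext i j
  fin_cases i <;> fin_cases j <;> simp <;> omega

lemma actForm_one (f : BQF) : actForm 1 f = f := by
  obtain ⟨a, b, c⟩ := f
  simp [actForm, Matrix.one_apply]

lemma trace_conj (g h : SL2Z) :
    Matrix.trace ((g * h * g⁻¹ : SL2Z) : Matrix (Fin 2) (Fin 2) ℤ)
      = Matrix.trace (h : Matrix (Fin 2) (Fin 2) ℤ) := by
  rw [show (g * h * g⁻¹ : SL2Z) = (g * h) * g⁻¹ from rfl,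
    Matrix.SpecialLinearGroup.coe_mul, Matrix.trace_mul_comm,
    ← Matrix.SpecialLinearGroup.coe_mul]
  congr 1
  rw [inv_mul_cancel_left]

/-- (Chowla–Cowles–Cowles) For t ≠ ±2, the assignment [[a,b],[c,d]] ↦ bx² + (d-a)xy - cy²
induces a well-defined bijection from conjugacy classes of SL₂(ℤ) of trace t onto
equivalence classes of integral binary quadratic forms of discriminant t² - 4. -/
theorem stmt10 (t : ℤ) (ht2 : t ≠ 2) (ht2' : t ≠ -2) :
    (∀ m : SL2Z, Matrix.trace (m : Matrix (Fin 2) (Fin 2) ℤ) = t →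
      disc (matForm m) = t ^ 2 - 4) ∧
    (∀ m m' : SL2Z, Matrix.trace (m : Matrix (Fin 2) (Fin 2) ℤ) = t →
      Matrix.trace ((m' : Matrix (Fin 2) (Fin 2) ℤ)) = t →
      (IsConj m m' ↔ formEquiv (matForm m) (matForm m'))) ∧
    (∀ f : BQF, disc f = t ^ 2 - 4 →
      ∃ m : SL2Z, Matrix.trace ((m : Matrix (Fin 2) (Fin 2) ℤ)) = t ∧
        formEquiv (matForm m) f) := by
  refine ⟨?_, ?_, ?_⟩
  · intro m htr
    have D := m.property
    rw [Matrix.det_fin_two] at D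
    rw [Matrix.trace_fin_two] at htr
    simp only [disc, matForm]
    linear_combination (((m : Matrix (Fin 2) (Fin 2) ℤ) 0 0 + (m : Matrix (Fin 2) (Fin 2) ℤ) 1 1) + t) * htr - 4 * D
  · intro m m' htm htm'
    rw [isConj_iff]
    constructor
    · rintro ⟨c, hc⟩
      refine ⟨tSL c, key (tSL c) m m' ?_⟩
      have h2 : (m' * c : SL2Z) = c * m := by rw [← hc]; group
      have h3 : (m' : Matrix (Fin 2) (Fin 2) ℤ) * c = (c : Matrix (Fin 2) (Fin 2) ℤ) * m := by
        rw [← Matrix.SpecialLinearGroup.coe_mul, ← Matrix.SpecialLinearGroup.coe_mul, h2]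
      simpa [tSL] using h3
    · rintro ⟨M, hM⟩
      set n : SL2Z := tSL M * m * (tSL M)⁻¹ with hn
      have hrel : (n : Matrix (Fin 2) (Fin 2) ℤ) * (M : Matrix (Fin 2) (Fin 2) ℤ)ᵀ
          = (M : Matrix (Fin 2) (Fin 2) ℤ)ᵀ * (m : Matrix (Fin 2) (Fin 2) ℤ) := by
        have h2 : (n * tSL M : SL2Z) = tSL M * m := by rw [hn]; group
        have h3 : (n : Matrix (Fin 2) (Fin 2) ℤ) * (tSL M : Matrix (Fin 2) (Fin 2) ℤ)
            = (tSL M : Matrix (Fin 2) (Fin 2) ℤ) * m := by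
          rw [← Matrix.SpecialLinearGroup.coe_mul, ← Matrix.SpecialLinearGroup.coe_mul, h2]
        simpa [tSL] using h3
      have hform : matForm n = matForm m' := by
        rw [← key M m n hrel, hM]
      have htrn : Matrix.trace (n : Matrix (Fin 2) (Fin 2) ℤ) = t := by
        rw [hn, trace_conj, htm]
      have hnm : n = m' := matForm_inj n m' hform (by rw [htrn, htm'])
      exact ⟨tSL M, hn.symm.trans hnm⟩
  · rintro ⟨A, B, C⟩ hdisc
    simp only [disc] at hdisc
    have hpar : ∃ k : ℤ, t - B = 2 * k := by
      rcases Int.even_or_odd (t - B) with ⟨k, hk⟩ | ⟨k, hk⟩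
      · exact ⟨k, by omega⟩
      · exfalso
        have h1 : (t - B) * (t + B) = 4 * (1 - A * C) := by ring_nf; linarith
        have h2 : Odd ((t - B) * (t + B)) := by
          refine Odd.mul ⟨k, hk⟩ ⟨k + B, by omega⟩
        obtain ⟨j, hj⟩ := h2
        omega
    obtain ⟨k, hk⟩ := hpar
    have hB : B = t - 2 * k := by omega
    subst hB
    have hdet : k * (t - k) - A * (-C) = 1 := by nlinarith [hdisc]
    refine ⟨⟨!![k, A; -C, t - k], by rw [Matrix.det_fin_two]; simpa using hdet⟩, ?_, ?_⟩
    · rw [Matrix.trace_fin_two]; simp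
    · refine ⟨1, ?_⟩
      rw [actForm_one]
      simp only [matForm]
      simp only [Prod.mk.injEq]
      norm_num
      omega
end

section
/- Let k ∈ {1,2} and let u, v, w be positive integers. Then, with φ, ε, Δ as above: tr(Δ²ᵏ σ₁⁻¹ σ₂ᵘ σ₁⁻¹ σ₂ᵛ σ₁⁻¹ σ₂ʷ) = (-1)ᵏ (1 + u + v + w + u(1+v) + v(1+w) + w(1+u) + (1+u)(1+v)(1+w)) and ε(Δ²ᵏ σ₁⁻¹ σ₂ᵘ σ₁⁻¹ σ₂ᵛ σ₁⁻¹ σ₂ʷ) = u + v + w - 3 + 6k. -/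
open Matrix

lemma trB_apply (g : B3) : trB g = ((φ g : SL2Z) : Matrix (Fin 2) (Fin 2) ℤ).trace := rfl

lemma coe_φ_Δ_sq : (φ (Δ ^ 2) : Matrix (Fin 2) (Fin 2) ℤ) = -1 := by
  ext i j
  fin_cases i <;> fin_cases j <;> rfl

lemma trB_Δ_sq_mul (g : B3) : trB (Δ ^ 2 * g) = -trB g := by
  rw [trB_apply, map_mul, Matrix.SpecialLinearGroup.coe_mul, coe_φ_Δ_sq, neg_one_mul, trace_neg,
    trB_apply]

lemma trB_Δ_pow_two_mul (k : ℕ) (g : B3) : trB (Δ ^ (2 * k) * g) = (-1) ^ k * trB g := by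
  induction k generalizing g with
  | zero => simp
  | succ k ih => rw [mul_add_one, pow_add, mul_assoc, ih, trB_Δ_sq_mul, pow_succ]; ring

lemma coe_φ_σ₁_inv_mul_σ₂_pow (n : ℕ) :
    (φ (σ₁⁻¹ * σ₂ ^ n) : Matrix (Fin 2) (Fin 2) ℤ) = !![1 + (n : ℤ), -1; -(n : ℤ), 1] := by
  induction n with
  | zero => ext i j; fin_cases i <;> fin_cases j <;> rfl
  | succ n ih =>
    rw [pow_succ, ← mul_assoc, map_mul, Matrix.SpecialLinearGroup.coe_mul, ih, φ_σ₂]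
    ext i j
    fin_cases i <;> fin_cases j <;> simp [T] <;> ring

lemma trB_σ₁_inv_mul_σ₂_pow_three (u v w : ℕ) :
    trB (σ₁⁻¹ * σ₂ ^ u * (σ₁⁻¹ * σ₂ ^ v) * (σ₁⁻¹ * σ₂ ^ w)) =
      1 + (u : ℤ) + v + w + u * (1 + v) + v * (1 + w) + w * (1 + u) +
        (1 + u) * (1 + v) * (1 + w) := by
  rw [trB_apply, map_mul, map_mul, Matrix.SpecialLinearGroup.coe_mul,
    Matrix.SpecialLinearGroup.coe_mul, coe_φ_σ₁_inv_mul_σ₂_pow, coe_φ_σ₁_inv_mul_σ₂_pow,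
    coe_φ_σ₁_inv_mul_σ₂_pow]
  simp only [mul_fin_two, trace_fin_two_of]
  ring

lemma expSum_inv (g : B3) : expSum g⁻¹ = -expSum g := by
  simp [expSum]

lemma expSum_pow (g : B3) (n : ℕ) : expSum (g ^ n) = n * expSum g := by
  simp [expSum]

lemma expSum_σ₁ : expSum σ₁ = 1 := by
  simp [expSum, ε, σ₁, PresentedGroup.toGroup.of]

lemma expSum_σ₂ : expSum σ₂ = 1 := by
  simp [expSum, ε, σ₂, PresentedGroup.toGroup.of]

theorem stmt16_general (k u v w : ℕ) :
    trB (Δ ^ (2 * k) * σ₁⁻¹ * σ₂ ^ u * σ₁⁻¹ * σ₂ ^ v * σ₁⁻¹ * σ₂ ^ w) =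
      (-1) ^ k * (1 + (u : ℤ) + v + w + u * (1 + v) + v * (1 + w) + w * (1 + u) +
        (1 + u) * (1 + v) * (1 + w)) ∧
    expSum (Δ ^ (2 * k) * σ₁⁻¹ * σ₂ ^ u * σ₁⁻¹ * σ₂ ^ v * σ₁⁻¹ * σ₂ ^ w) =
      (u : ℤ) + v + w - 3 + 6 * k := by
  have hassoc : Δ ^ (2 * k) * σ₁⁻¹ * σ₂ ^ u * σ₁⁻¹ * σ₂ ^ v * σ₁⁻¹ * σ₂ ^ w =
      Δ ^ (2 * k) * (σ₁⁻¹ * σ₂ ^ u * (σ₁⁻¹ * σ₂ ^ v) * (σ₁⁻¹ * σ₂ ^ w)) := by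
    simp only [mul_assoc]
  rw [hassoc, trB_Δ_pow_two_mul, trB_σ₁_inv_mul_σ₂_pow_three]
  refine ⟨rfl, ?_⟩
  simp only [expSum_mul, expSum_inv, expSum_pow, expSum_σ₁, expSum_σ₂, expSum_Δ]
  push_cast
  ring

/-- Trace and exponent sum of Δ²ᵏ σ₁⁻¹ σ₂ᵘ σ₁⁻¹ σ₂ᵛ σ₁⁻¹ σ₂ʷ for k ∈ {1,2} and
positive u, v, w. -/
theorem stmt16 (k u v w : ℕ) (hk : k = 1 ∨ k = 2)
    (hu : 0 < u) (hv : 0 < v) (hw : 0 < w) :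
    trB (Δ ^ (2 * k) * σ₁⁻¹ * σ₂ ^ u * σ₁⁻¹ * σ₂ ^ v * σ₁⁻¹ * σ₂ ^ w) =
      (-1) ^ k * (1 + (u : ℤ) + v + w + u * (1 + v) + v * (1 + w) + w * (1 + u) +
        (1 + u) * (1 + v) * (1 + w)) ∧
    expSum (Δ ^ (2 * k) * σ₁⁻¹ * σ₂ ^ u * σ₁⁻¹ * σ₂ ^ v * σ₁⁻¹ * σ₂ ^ w) =
      (u : ℤ) + v + w - 3 + 6 * k :=
  stmt16_general k u v w
end
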